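/- KR-U confidence envelope in the online setting (Theorem 4.1, KR-U version): In the online setting, for any online procedure (α_k)_{k≥1} satisfying the conditional super-uniformity condition on the nulls, and for any δ ∈ (0,1), with probability at least 1 − δ, simultaneously for all k ≥ 1: FDP(R_k) ≤ 1 ∧ min_{a ∈ ℕ, a ≥ 1} { [ log(1/δ_a) / ( a log(1 + log(1/δ_a)/a) ) ] · ( a + Σ_{i=1}^k α_i ) / ( 1 ∨ R(k) ) }, where δ_a = δ/(κ a²). -/

import Mathlib

/-!
For `β ≥ 0` the product over the nulls `i ≤ k` of `e^{-β α_i} (1 + β 1{p_i ≤ α_i})` is a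
nonnegative supermartingale for the rejection filtration: super-uniformity, extended from fixed
levels to the predictable level `α_i` by rounding `α_i` up to a grid, gives
`E[1{p_i ≤ α_i} | G_{i-1}] ≤ α_i`, and `e^{-x} (1 + x) ≤ 1`. The product equals
`exp (log (1 + β) V_k - β ∑_{i ∈ H0, i ≤ k} α_i)` with `V_k` the number of false discoveries, so
Ville's inequality with `β = log (1/δ_a) / a` bounds `V_k ≤ KRconstOnline δ a * (a + ∑ α_i)`
for all `k` simultaneously outside an event of probability `δ_a`. A union bound over `a`, with
`∑ δ_a = δ`, finishes the proof.
-/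

open MeasureTheory ProbabilityTheory Real Set

/-- The KR-type online constant `log(1/δ_a) / (a log(1 + log(1/δ_a)/a))`
with `δ_a = δ/(κ a²)`, `κ = π²/6`. -/
noncomputable def KRconstOnline (δ : ℝ) (a : ℕ) : ℝ :=
  Real.log (1 / (δ / ((Real.pi ^ 2 / 6) * (a : ℝ) ^ 2)))
    / ((a : ℝ) * Real.log (1 + Real.log (1 / (δ / ((Real.pi ^ 2 / 6) * (a : ℝ) ^ 2))) / (a : ℝ)))

section SuperUniformity

variable {Ω : Type*} {m m0 : MeasurableSpace Ω} {μ : Measure Ω} [IsFiniteMeasure μ]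
  {q α : Ω → ℝ}

lemma integrable_indicator_setOf_le (hq : Measurable q) (hα : Measurable α) :
    Integrable ({ω | q ω ≤ α ω}.indicator fun _ => (1:ℝ)) μ :=
  (integrable_const 1).indicator (measurableSet_le hq hα)

lemma condExp_indicator_le_add_inv (hm : m ≤ m0) (hq : Measurable q)
    (hα : Measurable[m] α) (hα01 : ∀ ω, α ω ∈ Icc (0:ℝ) 1)
    (hsup : ∀ x ∈ Icc (0:ℝ) 1,
      ∀ᵐ ω ∂μ, μ[{ω' | q ω' ≤ x}.indicator (fun _ => (1:ℝ)) | m] ω ≤ x)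
    {n : ℕ} (hn : 0 < n) :
    ∀ᵐ ω ∂μ, μ[{ω' | q ω' ≤ α ω'}.indicator (fun _ => (1:ℝ)) | m] ω ≤ α ω + 1 / n := by
  have hn' : (0:ℝ) < n := by exact_mod_cast hn
  have hα' : Measurable α := hα.mono hm le_rfl
  have hJα := integrable_indicator_setOf_le (μ := μ) hq hα'
  have hJ := fun x : ℝ => integrable_indicator_setOf_le (μ := μ) hq (measurable_const (a := x))
  -- on `cell i` the level `α` lies in `((i - 1) / n, i / n]`
  set cell : ℕ → Set Ω := fun i => {ω | ⌈α ω * n⌉₊ = i}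
  have hcell : ∀ i, MeasurableSet[m] (cell i) := fun i =>
    (Nat.measurable_ceil.comp (hα.mul_const _)) (measurableSet_singleton i)
  have hceil_le : ∀ ω, ⌈α ω * n⌉₊ ≤ n := fun ω =>
    Nat.ceil_le.mpr (by nlinarith [(hα01 ω).2])
  have hon_cell : ∀ i, ∀ᵐ ω ∂μ, ω ∈ cell i →
      μ[{ω' | q ω' ≤ α ω'}.indicator (fun _ => (1:ℝ)) | m] ω ≤ i / n := by
    intro i
    by_cases hi : i ≤ n
    swap
    · exact ae_of_all _ fun ω (hω : _ = i) => absurd (hω ▸ hceil_le ω) hi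
    have hpt : (cell i).indicator ({ω' | q ω' ≤ α ω'}.indicator fun _ => (1:ℝ))
        ≤ (cell i).indicator ({ω' | q ω' ≤ (i:ℝ) / n}.indicator fun _ => (1:ℝ)) := by
      intro ω
      by_cases hω : ω ∈ cell i
      · have : α ω ≤ i / n := by
          rw [le_div_iff₀ hn', ← (hω : _ = i)]; exact Nat.le_ceil _
        simp only [indicator_of_mem hω, indicator_apply, mem_ofPred_eq]
        split_ifs <;> linarith
      · simp [indicator_of_notMem hω]
    have hmono := condExp_mono (m := m) (hJα.indicator (hm _ (hcell i)))
      ((hJ _).indicator (hm _ (hcell i))) (ae_of_all _ hpt)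
    filter_upwards [hmono, condExp_indicator hJα (hcell i), condExp_indicator (hJ _) (hcell i),
      hsup (i / n) ⟨by positivity, (div_le_one hn').2 (by exact_mod_cast hi)⟩]
      with ω h1 h2 h3 h4 hω
    rw [indicator_of_mem hω] at h2 h3
    exact (h2 ▸ h3 ▸ h1).trans h4
  filter_upwards [ae_all_iff.2 hon_cell] with ω hω
  refine (hω _ rfl).trans ?_
  rw [div_le_iff₀ hn', add_mul, one_div_mul_cancel hn'.ne']
  exact (Nat.ceil_lt_add_one (mul_nonneg (hα01 ω).1 hn'.le)).le

lemma condExp_indicator_le_of_measurable (hm : m ≤ m0) (hq : Measurable q)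
    (hα : Measurable[m] α) (hα01 : ∀ ω, α ω ∈ Icc (0:ℝ) 1)
    (hsup : ∀ x ∈ Icc (0:ℝ) 1,
      ∀ᵐ ω ∂μ, μ[{ω' | q ω' ≤ x}.indicator (fun _ => (1:ℝ)) | m] ω ≤ x) :
    μ[{ω' | q ω' ≤ α ω'}.indicator (fun _ => (1:ℝ)) | m] ≤ᵐ[μ] α := by
  have h := ae_all_iff.2 fun n : ℕ =>
    condExp_indicator_le_add_inv hm hq hα hα01 hsup n.succ_pos
  filter_upwards [h] with ω hω
  refine le_of_forall_pos_le_add fun ε hε => ?_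
  obtain ⟨n, hn⟩ := exists_nat_one_div_lt hε
  exact (hω n).trans (by push_cast at hn ⊢; linarith)

end SuperUniformity

namespace MeasureTheory.Supermartingale

variable {Ω : Type*} {m0 : MeasurableSpace Ω} {μ : Measure Ω} [IsFiniteMeasure μ]
  {ℱ : Filtration ℕ m0} {f : ℕ → Ω → ℝ}

lemma integral_stoppedValue_hittingBtwn_le (hf : Supermartingale f ℱ μ) {s : Set ℝ}
    (hs : MeasurableSet s) (n : ℕ) :
    μ[stoppedValue f fun ω => (hittingBtwn f s 0 n ω : ℕ)] ≤ μ[f 0] := by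
  have hτ : IsStoppingTime ℱ fun ω => (hittingBtwn f s 0 n ω : ℕ) :=
    hf.stronglyAdapted.adapted.isStoppingTime_hittingBtwn hs
  have h := hf.neg.expected_stoppedValue_mono (isStoppingTime_const ℱ 0) hτ
    (fun _ => bot_le) (N := n) (fun ω => WithTop.coe_le_coe.2 (hittingBtwn_le ω))
  simp only [stoppedValue_const] at h
  simp only [stoppedValue, Pi.neg_apply, integral_neg] at h ⊢
  linarith

lemma measure_exists_le_ge_le (hf : Supermartingale f ℱ μ) (hnonneg : 0 ≤ f) {t : ℝ}
    (ht : 0 < t) (n : ℕ) :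
    μ {ω | ∃ j ≤ n, t ≤ f j ω} ≤ ENNReal.ofReal (μ[f 0] / t) := by
  set g := stoppedValue f fun ω => (hittingBtwn f (Ici t) 0 n ω : ℕ)
  have hsub : {ω | ∃ j ≤ n, t ≤ f j ω} ⊆ {ω | t ≤ g ω} := fun ω ⟨j, hjn, hj⟩ =>
    stoppedValue_hittingBtwn_mem ⟨j, ⟨Nat.zero_le j, hjn⟩, hj⟩
  have hg : Integrable g μ :=
    integrable_stoppedValue ℕ (hf.stronglyAdapted.adapted.isStoppingTime_hittingBtwn
      measurableSet_Ici) hf.integrable (N := n) fun ω => WithTop.coe_le_coe.2 (hittingBtwn_le ω)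
  have hmarkov : t * μ.real {ω | t ≤ g ω} ≤ μ[g] :=
    mul_meas_ge_le_integral_of_nonneg (ae_of_all _ fun ω => hnonneg _ ω) hg t
  have hstop : μ[g] ≤ μ[f 0] := hf.integral_stoppedValue_hittingBtwn_le measurableSet_Ici n
  calc μ {ω | ∃ j ≤ n, t ≤ f j ω} ≤ μ {ω | t ≤ g ω} := measure_mono hsub
    _ = ENNReal.ofReal (μ.real {ω | t ≤ g ω}) := (ofReal_measureReal (measure_ne_top _ _)).symm
    _ ≤ ENNReal.ofReal (μ[f 0] / t) := by
      gcongr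
      rw [le_div_iff₀ ht]
      linarith

/-- **Ville's inequality**. -/
theorem measure_exists_ge_le (hf : Supermartingale f ℱ μ) (hnonneg : 0 ≤ f) {t : ℝ}
    (ht : 0 < t) :
    μ {ω | ∃ n, t ≤ f n ω} ≤ ENNReal.ofReal (μ[f 0] / t) := by
  have hunion : {ω | ∃ n, t ≤ f n ω} = ⋃ n, {ω | ∃ j ≤ n, t ≤ f j ω} := by
    ext ω
    simp only [mem_ofPred_eq, mem_iUnion]
    exact ⟨fun ⟨n, hn⟩ => ⟨n, n, le_rfl, hn⟩, fun ⟨_, j, _, hj⟩ => ⟨j, hj⟩⟩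
  have hmono : Monotone fun n => {ω | ∃ j ≤ n, t ≤ f j ω} :=
    fun _ _ hmn _ ⟨j, hj, hjt⟩ => ⟨j, hj.trans hmn, hjt⟩
  rw [hunion, hmono.measure_iUnion]
  exact iSup_le (hf.measure_exists_le_ge_le hnonneg ht)

end MeasureTheory.Supermartingale

section KRProduct

variable {Ω : Type*} (β : ℝ) (p a : ℕ → Ω → ℝ) (H0 : Set ℕ) [DecidablePred (· ∈ H0)]

noncomputable def krFactor (i : ℕ) (ω : Ω) : ℝ :=
  if i ∈ H0 then
    exp (-(β * a i ω)) * (1 + β * {ω' | p i ω' ≤ a i ω'}.indicator (fun _ => (1:ℝ)) ω)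
  else 1

noncomputable def krProduct (k : ℕ) (ω : Ω) : ℝ :=
  ∏ i ∈ Finset.Icc 1 k, krFactor β p a H0 i ω

variable {β p a H0}

lemma krFactor_nonneg (hβ : 0 ≤ β) (i : ℕ) (ω : Ω) : 0 ≤ krFactor β p a H0 i ω := by
  unfold krFactor
  split_ifs
  · have : 0 ≤ {ω' | p i ω' ≤ a i ω'}.indicator (fun _ => (1:ℝ)) ω :=
      indicator_nonneg (fun _ _ => zero_le_one) ω
    positivity
  · exact zero_le_one

lemma krFactor_le (hβ : 0 ≤ β) {i : ℕ} {ω : Ω} (ha : 0 ≤ a i ω) :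
    krFactor β p a H0 i ω ≤ 1 + β := by
  unfold krFactor
  split_ifs
  · have hexp : exp (-(β * a i ω)) ≤ 1 := exp_le_one_iff.2 (by nlinarith)
    have hind : {ω' | p i ω' ≤ a i ω'}.indicator (fun _ => (1:ℝ)) ω ≤ 1 :=
      indicator_le_self' (fun _ _ => zero_le_one) ω
    have hind0 : 0 ≤ {ω' | p i ω' ≤ a i ω'}.indicator (fun _ => (1:ℝ)) ω :=
      indicator_nonneg (fun _ _ => zero_le_one) ω
    calc _ ≤ 1 * (1 + β) := by gcongr; nlinarith
      _ = 1 + β := one_mul _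
  · linarith

lemma krProduct_nonneg (hβ : 0 ≤ β) (k : ℕ) (ω : Ω) : 0 ≤ krProduct β p a H0 k ω :=
  Finset.prod_nonneg fun i _ => krFactor_nonneg hβ i ω

lemma krProduct_le_pow (hβ : 0 ≤ β) (ha : ∀ i ω, 0 ≤ a i ω) (k : ℕ) (ω : Ω) :
    krProduct β p a H0 k ω ≤ (1 + β) ^ k := by
  calc krProduct β p a H0 k ω ≤ ∏ _i ∈ Finset.Icc 1 k, (1 + β) :=
        Finset.prod_le_prod (fun i _ => krFactor_nonneg hβ i ω) fun i _ =>
          krFactor_le hβ (ha i ω)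
    _ = (1 + β) ^ k := by simp

lemma krProduct_succ (k : ℕ) :
    krProduct β p a H0 (k + 1) = krProduct β p a H0 k * krFactor β p a H0 (k + 1) := by
  ext ω
  exact Finset.prod_Icc_succ_top (Nat.le_add_left 1 k) _

open Finset in
lemma krProduct_eq_exp (hβ : -1 < β) (k : ℕ) (ω : Ω) :
    krProduct β p a H0 k ω = exp (log (1 + β) * #{i ∈ Icc 1 k | i ∈ H0 ∧ p i ω ≤ a i ω}
      - β * ∑ i ∈ Icc 1 k with i ∈ H0, a i ω) := by
  rw [natCast_card_filter, sum_filter, mul_sum, mul_sum, ← sum_sub_distrib, exp_sum]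
  refine prod_congr rfl fun i _ => ?_
  unfold krFactor
  by_cases hi : i ∈ H0
  · by_cases hrej : p i ω ≤ a i ω
    · simp [hi, hrej, exp_sub, exp_log (by linarith : 0 < 1 + β), exp_neg]
      ring
    · simp [hi, hrej, exp_neg]
  · simp [hi]

variable [MeasurableSpace Ω] {μ : Measure Ω} {ℱ : Filtration ℕ ‹MeasurableSpace Ω›}

lemma measurable_krFactor
    (hrej : ∀ i, 1 ≤ i → MeasurableSet[ℱ i] {ω | p i ω ≤ a i ω})
    (hpred : ∀ k, 1 ≤ k → Measurable[ℱ (k - 1)] (a k)) {i k : ℕ} (hi : 1 ≤ i) (hik : i ≤ k) :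
    Measurable[ℱ k] (krFactor β p a H0 i) := by
  have ha : Measurable[ℱ k] (a i) := (hpred i hi).mono (ℱ.mono (by omega)) le_rfl
  have hX : Measurable[ℱ k] ({ω | p i ω ≤ a i ω}.indicator fun _ => (1:ℝ)) :=
    measurable_const.indicator (ℱ.mono hik _ (hrej i hi))
  unfold krFactor
  split_ifs
  · exact (ha.const_mul β).neg.exp.mul (measurable_const.add (hX.const_mul β))
  · exact measurable_const

lemma stronglyAdapted_krProduct
    (hrej : ∀ i, 1 ≤ i → MeasurableSet[ℱ i] {ω | p i ω ≤ a i ω})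
    (hpred : ∀ k, 1 ≤ k → Measurable[ℱ (k - 1)] (a k)) :
    StronglyAdapted ℱ (krProduct β p a H0) := fun _ =>
  (Finset.measurable_prod _ fun _ hi => measurable_krFactor hrej hpred
    (Finset.mem_Icc.1 hi).1 (Finset.mem_Icc.1 hi).2).stronglyMeasurable

lemma condExp_krFactor_le_one [IsFiniteMeasure μ] (hβ : 0 ≤ β)
    (ha01 : ∀ k ω, a k ω ∈ Icc (0:ℝ) 1) (hp : ∀ k, Measurable (p k))
    (hpred : ∀ k, 1 ≤ k → Measurable[ℱ (k - 1)] (a k))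
    (hsuper : ∀ k ∈ H0, 1 ≤ k → ∀ x ∈ Icc (0:ℝ) 1,
      ∀ᵐ ω ∂μ, μ[{ω' | p k ω' ≤ x}.indicator (fun _ => (1:ℝ)) | ℱ (k - 1)] ω ≤ x) (k : ℕ) :
    μ[krFactor β p a H0 (k + 1) | ℱ k] ≤ᵐ[μ] 1 := by
  by_cases hk : k + 1 ∈ H0
  swap
  · have : krFactor β p a H0 (k + 1) = fun _ => 1 := by funext ω; simp [krFactor, hk]
    rw [this, condExp_const (ℱ.le k)]
    rfl
  set X : Ω → ℝ := {ω | p (k + 1) ω ≤ a (k + 1) ω}.indicator fun _ => 1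
  set E : Ω → ℝ := fun ω => exp (-(β * a (k + 1) ω))
  have ha : Measurable[ℱ k] (a (k + 1)) := by simpa using hpred (k + 1) (by omega)
  have hE : Measurable[ℱ k] E := (ha.const_mul β).neg.exp
  have hE1 : ∀ ω, ‖E ω‖ ≤ 1 := fun ω => by
    rw [norm_of_nonneg (exp_nonneg _), exp_le_one_iff]
    nlinarith [(ha01 (k + 1) ω).1]
  have hXint : Integrable X μ := integrable_indicator_setOf_le (hp _) (ha.mono (ℱ.le k) le_rfl)
  have hF : krFactor β p a H0 (k + 1) = E * ((fun _ => 1) + β • X) := by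
    funext ω; simp [krFactor, hk, E, X]
  have hX : μ[X | ℱ k] ≤ᵐ[μ] a (k + 1) := by
    refine condExp_indicator_le_of_measurable (ℱ.le k) (hp _) ha (ha01 _) fun x hx => ?_
    simpa using hsuper (k + 1) hk (by omega) x hx
  filter_upwards [condExp_stronglyMeasurable_mul_of_bound (ℱ.le k) hE.stronglyMeasurable
      ((integrable_const 1).add (hXint.smul β)) 1 (ae_of_all _ hE1),
    condExp_add (integrable_const (1:ℝ)) (hXint.smul β) (ℱ k),
    condExp_smul β X (ℱ k), hX] with ω h1 h2 h3 h4
  rw [hF, h1, Pi.mul_apply, h2, Pi.add_apply, h3, condExp_const (ℱ.le k)]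
  simp only [Pi.smul_apply, smul_eq_mul, Pi.one_apply, E]
  calc exp (-(β * a (k + 1) ω)) * (1 + β * μ[X | ℱ k] ω)
      ≤ exp (-(β * a (k + 1) ω)) * exp (β * a (k + 1) ω) := by
        gcongr
        linarith [add_one_le_exp (β * a (k + 1) ω), mul_le_mul_of_nonneg_left h4 hβ]
    _ = 1 := by rw [← exp_add, neg_add_cancel, exp_zero]

lemma supermartingale_krProduct [IsFiniteMeasure μ] (hβ : 0 ≤ β)
    (ha01 : ∀ k ω, a k ω ∈ Icc (0:ℝ) 1) (hp : ∀ k, Measurable (p k))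
    (hrej : ∀ i, 1 ≤ i → MeasurableSet[ℱ i] {ω | p i ω ≤ a i ω})
    (hpred : ∀ k, 1 ≤ k → Measurable[ℱ (k - 1)] (a k))
    (hsuper : ∀ k ∈ H0, 1 ≤ k → ∀ x ∈ Icc (0:ℝ) 1,
      ∀ᵐ ω ∂μ, μ[{ω' | p k ω' ≤ x}.indicator (fun _ => (1:ℝ)) | ℱ (k - 1)] ω ≤ x) :
    Supermartingale (krProduct β p a H0) ℱ μ := by
  have hadp := stronglyAdapted_krProduct (H0 := H0) (β := β) hrej hpred
  have hbound : ∀ k ω, ‖krProduct β p a H0 k ω‖ ≤ (1 + β) ^ k := fun k ω => by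
    rw [norm_of_nonneg (krProduct_nonneg hβ k ω)]
    exact krProduct_le_pow hβ (fun i ω => (ha01 i ω).1) k ω
  have hint : ∀ k, Integrable (krProduct β p a H0 k) μ := fun k =>
    .of_bound ((hadp k).mono (ℱ.le k)).aestronglyMeasurable _ (ae_of_all _ (hbound k))
  have hFint : ∀ k, Integrable (krFactor β p a H0 (k + 1)) μ := fun k =>
    .of_bound ((measurable_krFactor hrej hpred (by omega) le_rfl).mono (ℱ.le (k + 1))
      le_rfl).aestronglyMeasurable (1 + β) (ae_of_all _ fun ω => by
        rw [norm_of_nonneg (krFactor_nonneg hβ _ ω)]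
        exact krFactor_le hβ (ha01 _ ω).1)
  refine supermartingale_nat hadp hint fun k => ?_
  rw [krProduct_succ]
  filter_upwards [condExp_stronglyMeasurable_mul_of_bound (ℱ.le k) (hadp k) (hFint k) _
      (ae_of_all _ (hbound k)), condExp_krFactor_le_one hβ ha01 hp hpred hsuper k] with ω h1 h2
  rw [h1, Pi.mul_apply]
  exact mul_le_of_le_one_right (krProduct_nonneg hβ k ω) h2

theorem measure_exists_krProduct_ge_le [IsProbabilityMeasure μ] (hβ : 0 ≤ β)
    (ha01 : ∀ k ω, a k ω ∈ Icc (0:ℝ) 1) (hp : ∀ k, Measurable (p k))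
    (hrej : ∀ i, 1 ≤ i → MeasurableSet[ℱ i] {ω | p i ω ≤ a i ω})
    (hpred : ∀ k, 1 ≤ k → Measurable[ℱ (k - 1)] (a k))
    (hsuper : ∀ k ∈ H0, 1 ≤ k → ∀ x ∈ Icc (0:ℝ) 1,
      ∀ᵐ ω ∂μ, μ[{ω' | p k ω' ≤ x}.indicator (fun _ => (1:ℝ)) | ℱ (k - 1)] ω ≤ x)
    {t : ℝ} (ht : 0 < t) :
    μ {ω | ∃ k, t ≤ krProduct β p a H0 k ω} ≤ ENNReal.ofReal (1 / t) := by
  have hstart : krProduct β p a H0 0 = fun _ => 1 := by funext ω; simp [krProduct]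
  have h := (supermartingale_krProduct hβ ha01 hp hrej hpred hsuper).measure_exists_ge_le
    (krProduct_nonneg hβ) ht
  simpa [hstart] using h

end KRProduct

open Finset in
lemma card_le_of_krProduct_lt {Ω : Type*} {p a : ℕ → Ω → ℝ} {H0 : Set ℕ}
    [DecidablePred (· ∈ H0)] {L n : ℝ} (hL : 0 < L) (hn : 0 < n) {k : ℕ} {ω : Ω}
    (ha : ∀ i, 0 ≤ a i ω) (h : krProduct (L / n) p a H0 k ω < exp L) :
    (#{i ∈ Icc 1 k | i ∈ H0 ∧ p i ω ≤ a i ω} : ℝ)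
      ≤ L / (n * log (1 + L / n)) * (n + ∑ i ∈ Icc 1 k, a i ω) := by
  have hβ : 0 < L / n := div_pos hL hn
  have hlog : 0 < log (1 + L / n) := log_pos (by linarith)
  rw [krProduct_eq_exp (by linarith), exp_lt_exp] at h
  have hnull : ∑ i ∈ Icc 1 k with i ∈ H0, a i ω ≤ ∑ i ∈ Icc 1 k, a i ω :=
    sum_le_sum_of_subset_of_nonneg (filter_subset _ _) fun i _ _ => ha i
  have hV : log (1 + L / n) * #{i ∈ Icc 1 k | i ∈ H0 ∧ p i ω ≤ a i ω}
      ≤ L + L / n * ∑ i ∈ Icc 1 k, a i ω := by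
    nlinarith [mul_le_mul_of_nonneg_left hnull hβ.le]
  rw [div_mul_eq_mul_div, le_div_iff₀ (by positivity)]
  calc _ = n * (log (1 + L / n) * #{i ∈ Icc 1 k | i ∈ H0 ∧ p i ω ≤ a i ω}) := by ring
    _ ≤ n * (L + L / n * ∑ i ∈ Icc 1 k, a i ω) := by gcongr
    _ = L * (n + ∑ i ∈ Icc 1 k, a i ω) := by field_simp

lemma div_le_min_iInf {V R : ℕ} (hVR : V ≤ R) {ι : Type*} [Nonempty ι] {c : ι → ℝ}
    (hV : ∀ n, (V : ℝ) ≤ c n) :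
    (V : ℝ) / (max 1 R : ℕ) ≤ min 1 (⨅ n, c n / (max 1 R : ℕ)) := by
  have hR : (0 : ℝ) < (max 1 R : ℕ) := by exact_mod_cast lt_max_of_lt_left one_pos
  refine le_min ?_ (le_ciInf fun n => div_le_div_of_nonneg_right (hV n) hR.le)
  rw [div_le_one hR]
  exact_mod_cast hVR.trans (le_max_right 1 R)

lemma log_one_div_div_pi_sq_pos {δ : ℝ} (hδ : δ ∈ Ioo (0 : ℝ) 1) {n : ℕ} (hn : 1 ≤ n) :
    0 < log (1 / (δ / (π ^ 2 / 6 * (n : ℝ) ^ 2))) := by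
  have hn' : (1 : ℝ) ≤ (n : ℝ) ^ 2 := one_le_pow₀ (by exact_mod_cast hn)
  have hκ : 1 < π ^ 2 / 6 * (n : ℝ) ^ 2 := by nlinarith [pi_gt_three]
  rw [one_div, log_inv, neg_pos]
  exact log_neg (div_pos hδ.1 (by linarith)) ((div_lt_one (by linarith)).2 (by linarith [hδ.2]))

lemma hasSum_div_pi_sq_mul_succ_sq (δ : ℝ) :
    HasSum (fun n : ℕ => δ / (π ^ 2 / 6 * ((n + 1 : ℕ) : ℝ) ^ 2)) δ := by
  have h := hasSum_zeta_two.mul_left (δ / (π ^ 2 / 6))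
  rw [← hasSum_nat_add_iff' 1] at h
  have hκ : π ^ 2 / 6 ≠ 0 := by positivity
  have hval : δ / (π ^ 2 / 6) * (π ^ 2 / 6)
      - ∑ i ∈ Finset.range 1, δ / (π ^ 2 / 6) * (1 / (i : ℝ) ^ 2) = δ := by
    simp [hκ]
  rw [hval] at h
  refine h.congr_fun fun n => ?_
  field_simp

section UnionBound

variable {Ω : Type*} [MeasurableSpace Ω] {μ : Measure Ω}

lemma measure_iUnion_le_of_le_div_pi_sq {s : ℕ → Set Ω} {δ : ℝ} (hδ : 0 ≤ δ)
    (hs : ∀ n, μ (s n) ≤ ENNReal.ofReal (δ / (π ^ 2 / 6 * ((n + 1 : ℕ) : ℝ) ^ 2))) :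
    μ (⋃ n, s n) ≤ ENNReal.ofReal δ := by
  have hsum := hasSum_div_pi_sq_mul_succ_sq δ
  calc μ (⋃ n, s n) ≤ ∑' n, μ (s n) := measure_iUnion_le _
    _ ≤ _ := ENNReal.tsum_le_tsum hs
    _ = ENNReal.ofReal δ := by
      rw [← ENNReal.ofReal_tsum_of_nonneg (fun n => by positivity) hsum.summable, hsum.tsum_eq]

lemma one_sub_le_toReal_measure_of_compl_subset [IsProbabilityMeasure μ] {B T : Set Ω} {δ : ℝ}
    (hδ : 0 ≤ δ) (hB : μ B ≤ ENNReal.ofReal δ) (hBT : Bᶜ ⊆ T) : 1 - δ ≤ (μ T).toReal := by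
  have hB' : μ.real B ≤ δ := ENNReal.toReal_le_of_le_ofReal hδ hB
  have : 1 ≤ μ.real B + μ.real T :=
    calc 1 = μ.real univ := probReal_univ.symm
      _ ≤ μ.real (B ∪ T) := measureReal_mono fun ω _ => (em (ω ∈ B)).imp id (@hBT ω)
      _ ≤ μ.real B + μ.real T := measureReal_union_le B T
  rw [← measureReal_def]
  linarith

end UnionBound

section EventFiltration

variable {Ω : Type*} [m0 : MeasurableSpace Ω]

def eventFiltration (E : ℕ → Set Ω) (hE : ∀ i, MeasurableSet (E i)) : Filtration ℕ m0 where
  seq k := MeasurableSpace.generateFrom {A | ∃ i, 1 ≤ i ∧ i ≤ k ∧ A = E i}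
  mono' _ _ hkl := MeasurableSpace.generateFrom_mono fun _ ⟨i, h1, h2, h3⟩ =>
    ⟨i, h1, h2.trans hkl, h3⟩
  le' _ := MeasurableSpace.generateFrom_le fun _ ⟨i, _, _, h⟩ => h ▸ hE i

lemma measurableSet_eventFiltration {E : ℕ → Set Ω} (hE : ∀ i, MeasurableSet (E i)) {i : ℕ}
    (hi : 1 ≤ i) : MeasurableSet[eventFiltration E hE i] (E i) :=
  MeasurableSpace.measurableSet_generateFrom ⟨i, hi, le_rfl, rfl⟩

end EventFiltration

theorem KRU_envelope_online_general
    {Ω : Type*} [MeasureSpace Ω] [IsProbabilityMeasure (ℙ : Measure Ω)]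
    (p : ℕ → Ω → ℝ) (a : ℕ → Ω → ℝ) (H0 : Set ℕ) [DecidablePred (· ∈ H0)]
    (haval : ∀ k ω, a k ω ∈ Set.Icc (0:ℝ) 1)
    (hpmeas : ∀ k, Measurable (p k))
    (hameas : ∀ k, Measurable (a k))
    -- the filtration generated by the past rejection indicators
    (G : ℕ → MeasurableSpace Ω)
    (hG : ∀ k, G k = MeasurableSpace.generateFrom
        {A | ∃ i, 1 ≤ i ∧ i ≤ k ∧ A = {ω | p i ω ≤ a i ω}})
    -- the critical values are predictable
    (hpred : ∀ k, 1 ≤ k → @Measurable Ω ℝ (G (k - 1)) _ (a k))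
    -- conditional super-uniformity of the null p-values
    (hsuper : ∀ k ∈ H0, 1 ≤ k → ∀ x ∈ Set.Icc (0:ℝ) 1,
      ∀ᵐ ω ∂(ℙ : Measure Ω),
        MeasureTheory.condExp (G (k - 1)) ℙ
          (Set.indicator {ω' | p k ω' ≤ x} (fun _ => (1:ℝ))) ω ≤ x)
    (δ : ℝ) (hδ : δ ∈ Set.Ioo (0:ℝ) 1) :
    1 - δ ≤ (ℙ {ω | ∀ k, 1 ≤ k →
        (((Finset.Icc 1 k).filter (fun i => i ∈ H0 ∧ p i ω ≤ a i ω)).card : ℝ)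
            / ((max 1 (((Finset.Icc 1 k).filter (fun i => p i ω ≤ a i ω)).card) : ℕ) : ℝ)
          ≤ min 1 (⨅ n : {n : ℕ // 1 ≤ n},
              KRconstOnline δ (n : ℕ)
                * (((n : ℕ) : ℝ) + ∑ i ∈ Finset.Icc 1 k, a i ω)
                / ((max 1 (((Finset.Icc 1 k).filter
                    (fun i => p i ω ≤ a i ω)).card) : ℕ) : ℝ))}).toReal := by
  have hδ0 : 0 < δ := hδ.1
  have hrej i : MeasurableSet {ω | p i ω ≤ a i ω} := measurableSet_le (hpmeas i) (hameas i)
  obtain rfl : G = eventFiltration _ hrej := funext hG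
  -- `level n` and `L n` are the paper's `δ_{n+1}` and `log (1 / δ_{n+1})`
  set level : ℕ → ℝ := fun n => δ / (π ^ 2 / 6 * ((n + 1 : ℕ) : ℝ) ^ 2)
  set L : ℕ → ℝ := fun n => log (1 / level n)
  have hL n : 0 < L n := log_one_div_div_pi_sq_pos hδ (Nat.le_add_left 1 n)
  have hlevel n : 0 < 1 / level n := one_div_pos.2 (div_pos hδ0 (by positivity))
  set bad : ℕ → Set Ω := fun n =>
    {ω | ∃ k, 1 / level n ≤ krProduct (L n / (n + 1 : ℕ)) p a H0 k ω}
  have hbad : ℙ (⋃ n, bad n) ≤ ENNReal.ofReal δ :=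
    measure_iUnion_le_of_le_div_pi_sq hδ0.le fun n =>
      (measure_exists_krProduct_ge_le (div_pos (hL n) (by positivity)).le haval hpmeas
        (fun _ hi => measurableSet_eventFiltration hrej hi) hpred hsuper (hlevel n)).trans_eq
        (by rw [one_div_one_div])
  refine one_sub_le_toReal_measure_of_compl_subset hδ0.le hbad fun ω hω k _ => ?_
  simp only [bad, mem_compl_iff, mem_iUnion, mem_ofPred_eq, not_exists, not_le] at hω
  have : Nonempty {n : ℕ // 1 ≤ n} := ⟨⟨1, le_rfl⟩⟩
  refine div_le_min_iInf (Finset.card_le_card (Finset.monotone_filter_right _ fun _ _ h => h.2))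
    fun ⟨n, hn⟩ => ?_
  obtain ⟨m, rfl⟩ : ∃ m, n = m + 1 := ⟨n - 1, by omega⟩
  refine card_le_of_krProduct_lt (hL m) (by positivity) (fun i => (haval i ω).1) ?_
  rw [exp_log (hlevel m)]
  exact hω m k

/-- KR-U confidence envelope in the online setting (Theorem 4.1, KR-U version). -/
theorem KRU_envelope_online
    {Ω : Type*} [MeasureSpace Ω] [IsProbabilityMeasure (ℙ : Measure Ω)]
    (p : ℕ → Ω → ℝ) (a : ℕ → Ω → ℝ) (H0 : Set ℕ) [DecidablePred (· ∈ H0)]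
    (hpval : ∀ k ω, p k ω ∈ Set.Icc (0:ℝ) 1)
    (haval : ∀ k ω, a k ω ∈ Set.Icc (0:ℝ) 1)
    (hpmeas : ∀ k, Measurable (p k))
    (hameas : ∀ k, Measurable (a k))
    -- the filtration generated by the past rejection indicators
    (G : ℕ → MeasurableSpace Ω)
    (hG : ∀ k, G k = MeasurableSpace.generateFrom
        {A | ∃ i, 1 ≤ i ∧ i ≤ k ∧ A = {ω | p i ω ≤ a i ω}})
    -- the critical values are predictable
    (hpred : ∀ k, 1 ≤ k → @Measurable Ω ℝ (G (k - 1)) _ (a k))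
    -- conditional super-uniformity of the null p-values
    (hsuper : ∀ k ∈ H0, 1 ≤ k → ∀ x ∈ Set.Icc (0:ℝ) 1,
      ∀ᵐ ω ∂(ℙ : Measure Ω),
        MeasureTheory.condExp (G (k - 1)) ℙ
          (Set.indicator {ω' | p k ω' ≤ x} (fun _ => (1:ℝ))) ω ≤ x)
    (δ : ℝ) (hδ : δ ∈ Set.Ioo (0:ℝ) 1) :
    1 - δ ≤ (ℙ {ω | ∀ k, 1 ≤ k →
        (((Finset.Icc 1 k).filter (fun i => i ∈ H0 ∧ p i ω ≤ a i ω)).card : ℝ)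
            / ((max 1 (((Finset.Icc 1 k).filter (fun i => p i ω ≤ a i ω)).card) : ℕ) : ℝ)
          ≤ min 1 (⨅ n : {n : ℕ // 1 ≤ n},
              KRconstOnline δ (n : ℕ)
                * (((n : ℕ) : ℝ) + ∑ i ∈ Finset.Icc 1 k, a i ω)
                / ((max 1 (((Finset.Icc 1 k).filter
                    (fun i => p i ω ≤ a i ω)).card) : ℕ) : ℝ))}).toReal :=
  KRU_envelope_online_general p a H0 haval hpmeas hameas G hG hpred hsuper δ hδ
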